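/- With j : ℍ → ℂ defined by the eta-quotient formula, and writing q = e^{2πiτ}, the function j has q-expansion beginning j(τ) = q⁻¹ + 744 + 196884q + O(q²); precisely, as Im τ → ∞ one has j(τ) − e^{−2πiτ} → 744, and ( j(τ) − e^{−2πiτ} − 744 )·e^{−2πiτ} → 196884. -/

import Mathlib

open Complex

/-- The Dedekind eta function `η(τ) = e^{πiτ/12} ∏_{n≥1} (1 − e^{2πinτ})`, defined here
for all `τ : ℂ` but only of interest on the upper half-plane `Im τ > 0`. -/
noncomputable def η (τ : ℂ) : ℂ :=
  Complex.exp (Real.pi * Complex.I * τ / 12) *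
    ∏' n : ℕ, (1 - Complex.exp (2 * Real.pi * Complex.I * (n + 1) * τ))

/-- The modular `j`-function, expressed as an eta quotient:
`j(τ) = η(τ)²⁴/η(2τ)²⁴ + 4096·η(τ)²⁴/η(τ/2)²⁴ − 4096·η(τ/2)²⁴η(2τ)²⁴/η(τ)⁴⁸ + 768`. -/
noncomputable def jEta (τ : ℂ) : ℂ :=
  η τ ^ 24 / η (2 * τ) ^ 24 + 4096 * (η τ ^ 24 / η (τ / 2) ^ 24)
    - 4096 * (η (τ / 2) ^ 24 * η (2 * τ) ^ 24 / η τ ^ 48) + 768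

/-!
Put `w = e^{πiτ}` (so `q = w²`) and let `φ(x) = ∏ (1 - x^{n+1})` be Euler's function.
Then `η(τ/2)²⁴ = w φ(w)²⁴`, `η(τ)²⁴ = w² φ(w²)²⁴` and `η(2τ)²⁴ = w⁴ φ(w⁴)²⁴`, and `Im τ → ∞` means `w → 0`, `w ≠ 0`.
So both limits are limits at `w = 0` of rational expressions in `w` and `α = φ²⁴`, and
they only depend on the expansion `α(x) = 1 - 24x + 252x² + O(x³)`. That expansion comes from
`φ(x) = (1 - x)(1 - x²)(1 + O(x³))`, since second-order expansions multiply like truncated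
polynomials. One finds `744 = 768 - 24` and `196884 = 276 + 4096 · 48`; the first limit
follows from the second because `q → 0`.
-/

open Filter Asymptotics Topology

section QuadraticExpansion

variable {𝕜 : Type*} [NormedField 𝕜]

def HasQuadraticExpansion (f : 𝕜 → 𝕜) (c a b : 𝕜) : Prop :=
  (fun x => f x - (c + a * x + b * x ^ 2)) =O[𝓝 0] fun x => x ^ 3

theorem hasQuadraticExpansion_quadratic (c a b : 𝕜) :
    HasQuadraticExpansion (fun x => c + a * x + b * x ^ 2) c a b := by
  simp only [HasQuadraticExpansion, sub_self]
  exact isBigO_zero _ _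

theorem isBigO_pow_mul_of_tendsto {r : 𝕜 → 𝕜} {d : 𝕜} (n : ℕ) (hr : Tendsto r (𝓝 0) (𝓝 d)) :
    (fun x => x ^ n * r x) =O[𝓝 0] fun x => x ^ n :=
  ((isBigO_refl _ _).mul (hr.isBigO_one 𝕜)).congr_right fun _ => mul_one _

namespace HasQuadraticExpansion

variable {f g : 𝕜 → 𝕜} {c a b c' a' b' : 𝕜}

theorem congr (hf : HasQuadraticExpansion f c a b) (hfg : f =ᶠ[𝓝 0] g) :
    HasQuadraticExpansion g c a b :=
  hf.congr' (hfg.mono fun x hx => by simp only [hx]) EventuallyEq.rfl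

theorem tendsto (hf : HasQuadraticExpansion f c a b) : Tendsto f (𝓝 0) (𝓝 c) := by
  have hrem : Tendsto (fun x => f x - (c + a * x + b * x ^ 2)) (𝓝 0) (𝓝 0) :=
    hf.trans_tendsto ((continuous_pow 3).tendsto' (0 : 𝕜) 0 (by simp))
  have hquad : Tendsto (fun x : 𝕜 => c + a * x + b * x ^ 2) (𝓝 0) (𝓝 c) :=
    (show Continuous fun x : 𝕜 => c + a * x + b * x ^ 2 by fun_prop).tendsto' 0 c (by simp)
  simpa using hrem.add hquad

theorem mul (hf : HasQuadraticExpansion f c a b) (hg : HasQuadraticExpansion g c' a' b') :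
    HasQuadraticExpansion (fun x => f x * g x) (c * c') (c * a' + a * c')
      (c * b' + a * a' + b * c') := by
  have hquad : (fun x : 𝕜 => c + a * x + b * x ^ 2) =O[𝓝 0] fun _ => (1 : 𝕜) :=
    (hasQuadraticExpansion_quadratic c a b).tendsto.isBigO_one 𝕜
  have hcross : (fun x : 𝕜 => x ^ 3 * (a * b' + b * a' + b * b' * x)) =O[𝓝 0] fun x => x ^ 3 :=
    isBigO_pow_mul_of_tendsto 3
      ((show Continuous fun x : 𝕜 => a * b' + b * a' + b * b' * x by fun_prop).tendsto 0)
  have hfg : (fun x => (f x - (c + a * x + b * x ^ 2)) * g x) =O[𝓝 0] fun x => x ^ 3 :=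
    (IsBigO.mul hf (hg.tendsto.isBigO_one 𝕜)).congr_right fun _ => mul_one _
  have hpg : (fun x => (c + a * x + b * x ^ 2) * (g x - (c' + a' * x + b' * x ^ 2)))
      =O[𝓝 0] fun x => x ^ 3 :=
    (hquad.mul hg).congr_right fun _ => one_mul _
  exact ((hfg.add hpg).add hcross).congr_left fun x => by ring

theorem sub (hf : HasQuadraticExpansion f c a b) (hg : HasQuadraticExpansion g c' a' b') :
    HasQuadraticExpansion (fun x => f x - g x) (c - c') (a - a') (b - b') :=
  (IsBigO.sub hf hg).congr_left fun x => by ring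

theorem comp_sq (hf : HasQuadraticExpansion f c a b) :
    HasQuadraticExpansion (fun x => f (x ^ 2)) c 0 a := by
  have hsq : Tendsto (fun x : 𝕜 => x ^ 2) (𝓝 0) (𝓝 0) :=
    (continuous_pow 2).tendsto' (0 : 𝕜) 0 (by simp)
  have hrem : (fun x => f (x ^ 2) - (c + a * x ^ 2 + b * (x ^ 2) ^ 2)) =O[𝓝 0]
      fun x => x ^ 3 :=
    (hf.comp_tendsto hsq).trans
      ((isLittleO_pow_pow (by norm_num : 3 < 6)).isBigO.congr_left fun x => by
        simp only [Function.comp_apply]; ring)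
  have hquartic : (fun x : 𝕜 => x ^ 3 * (b * x)) =O[𝓝 0] fun x => x ^ 3 :=
    isBigO_pow_mul_of_tendsto 3 ((continuous_const.mul continuous_id).tendsto 0)
  exact (hrem.add hquartic).congr_left fun x => by ring

theorem pow (hf : HasQuadraticExpansion f 1 a b) (n : ℕ) :
    HasQuadraticExpansion (fun x => f x ^ n) 1 (n * a) (n * b + n.choose 2 * a ^ 2) := by
  induction n with
  | zero => simpa using hasQuadraticExpansion_quadratic (1 : 𝕜) 0 0
  | succ n ih =>
    convert ih.mul hf using 1
    · simp only [pow_succ]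
    · ring
    · push_cast; ring
    · rw [Nat.choose_succ_succ', Nat.choose_one_right]; push_cast; ring

theorem tendsto_div_sq (hf : HasQuadraticExpansion f 0 0 b) :
    Tendsto (fun x => f x / x ^ 2) (𝓝[≠] 0) (𝓝 b) := by
  have h : Tendsto (fun x => (f x - (0 + 0 * x + b * x ^ 2)) / x ^ 2 + b) (𝓝[≠] 0) (𝓝 (0 + b)) :=
    ((hf.trans_isLittleO (isLittleO_pow_pow (by norm_num : 2 < 3))).mono
    nhdsWithin_le_nhds).tendsto_div_nhds_zero.add_const b
  rw [zero_add] at h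
  refine h.congr' (eventually_nhdsWithin_of_forall fun x (hx : x ≠ 0) => ?_)
  field_simp
  ring

theorem tendsto_div (hf : HasQuadraticExpansion f 0 a b) :
    Tendsto (fun x => f x / x) (𝓝[≠] 0) (𝓝 a) := by
  have hrem : Tendsto (fun x => (f x - (0 + a * x + b * x ^ 2)) / x) (𝓝[≠] 0) (𝓝 0) :=
    ((hf.trans_isLittleO ((isLittleO_pow_pow (by norm_num : 1 < 3)).congr_right
    fun x => pow_one x)).mono nhdsWithin_le_nhds).tendsto_div_nhds_zero
  have hlin : Tendsto (fun x : 𝕜 => b * x + a) (𝓝[≠] 0) (𝓝 a) :=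
    ((show Continuous fun x : 𝕜 => b * x + a by fun_prop).tendsto' 0 a (by simp)).mono_left
      nhdsWithin_le_nhds
  have h := hrem.add hlin
  rw [zero_add] at h
  refine h.congr' (eventually_nhdsWithin_of_forall fun x (hx : x ≠ 0) => ?_)
  simp only [zero_add]
  field_simp
  ring

end HasQuadraticExpansion

end QuadraticExpansion

theorem norm_tprod_one_add_sub_one_le {ι R : Type*} [NormedCommRing R] [NormOneClass R]
    [CompleteSpace R] {f : ι → R} (hf : Summable fun i => ‖f i‖) :
    ‖∏' i, (1 + f i) - 1‖ ≤ Real.exp (∑' i, ‖f i‖) - 1 := by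
  have hprod := (multipliable_one_add_of_summable hf).hasProd
  refine le_of_tendsto ((hprod.sub_const 1).norm) (Eventually.of_forall fun t => ?_)
  exact (t.norm_prod_one_add_sub_one_le f).trans (by
    gcongr; exact hf.sum_le_tsum t fun i _ => norm_nonneg _)

noncomputable def eulerFunction (x : ℂ) : ℂ := ∏' n : ℕ, (1 - x ^ (n + 1))

theorem hasSum_norm_neg_pow_add_three {x : ℂ} (hx : ‖x‖ < 1) :
    HasSum (fun n : ℕ => ‖-x ^ (n + 3)‖) (‖x‖ ^ 3 / (1 - ‖x‖)) := by
  simpa [pow_add, mul_comm, div_eq_mul_inv] using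
    (hasSum_geometric_of_lt_one (norm_nonneg x) hx).mul_left (‖x‖ ^ 3)

theorem eulerFunction_eq_mul_tprod {x : ℂ} (hx : ‖x‖ < 1) :
    eulerFunction x = (1 - x) * (1 - x ^ 2) * ∏' n : ℕ, (1 - x ^ (n + 3)) := by
  have h := Multipliable.prod_mul_tprod_nat_mul' (f := fun n : ℕ => 1 - x ^ (n + 1)) (k := 2)
    (by simpa [← sub_eq_add_neg] using
      multipliable_one_add_of_summable (hasSum_norm_neg_pow_add_three hx).summable)
  rw [Finset.prod_range_succ, Finset.prod_range_one] at h
  rw [eulerFunction, ← h]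
  norm_num

theorem norm_tprod_one_sub_pow_add_three_sub_one_le {x : ℂ} (hx : ‖x‖ ≤ 1 / 2) :
    ‖∏' n : ℕ, (1 - x ^ (n + 3)) - 1‖ ≤ 4 * ‖x‖ ^ 3 := by
  have hx1 : ‖x‖ < 1 := hx.trans_lt (by norm_num)
  set s := ‖x‖ ^ 3 / (1 - ‖x‖) with hs
  have hs0 : 0 ≤ s := div_nonneg (by positivity) (by linarith)
  have hs2 : s ≤ 2 * ‖x‖ ^ 3 := by
    rw [hs, div_le_iff₀ (by linarith)]
    nlinarith [pow_nonneg (norm_nonneg x) 3]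
  have hs1 : s ≤ 1 := hs2.trans (by nlinarith [pow_le_pow_left₀ (norm_nonneg x) hx 3])
  have hexp : Real.exp s - 1 ≤ 2 * s := by
    have h := Real.abs_exp_sub_one_le (x := s) (by rwa [abs_of_nonneg hs0])
    rw [abs_of_nonneg hs0] at h
    exact (le_abs_self _).trans h
  have h := norm_tprod_one_add_sub_one_le (hasSum_norm_neg_pow_add_three hx1).summable
  simp only [← sub_eq_add_neg, (hasSum_norm_neg_pow_add_three hx1).tsum_eq] at h
  linarith

theorem hasQuadraticExpansion_eulerFunction :
    HasQuadraticExpansion eulerFunction 1 (-1) (-1) := by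
  have htail : HasQuadraticExpansion (fun x : ℂ => ∏' n : ℕ, (1 - x ^ (n + 3))) 1 0 0 := by
    refine IsBigO.of_bound 4 ?_
    filter_upwards [Metric.closedBall_mem_nhds (0 : ℂ) (by norm_num : (0 : ℝ) < 1 / 2)] with x hx
    rw [mem_closedBall_zero_iff] at hx
    simpa using norm_tprod_one_sub_pow_add_three_sub_one_le hx
  have hlin := hasQuadraticExpansion_quadratic (1 : ℂ) (-1) 0
  have hsq := hasQuadraticExpansion_quadratic (1 : ℂ) 0 (-1)
  have hprod : (fun x => (1 + -1 * x + 0 * x ^ 2) * (1 + 0 * x + -1 * x ^ 2) *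
      ∏' n : ℕ, (1 - x ^ (n + 3))) =ᶠ[𝓝 0] eulerFunction := by
    filter_upwards [Metric.ball_mem_nhds (0 : ℂ) one_pos] with x hx
    rw [eulerFunction_eq_mul_tprod (mem_ball_zero_iff.mp hx)]
    ring
  convert ((hlin.mul hsq).mul htail).congr hprod using 1 <;> norm_num

theorem hasQuadraticExpansion_eulerFunction_pow_24 :
    HasQuadraticExpansion (fun x => eulerFunction x ^ 24) 1 (-24) 252 := by
  convert hasQuadraticExpansion_eulerFunction.pow 24 using 1 <;> norm_num [Nat.choose]

/-- With `w = e^{πiτ}` and `α = φ²⁴` this is `(j(τ) - w⁻² - 744) w⁻²`; each numerator vanishes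
to the order of the power of `w` it is divided by. -/
noncomputable def jRemainder (α : ℂ → ℂ) (w : ℂ) : ℂ :=
  (α (w ^ 2) - (1 - 24 * w ^ 2) * α ((w ^ 2) ^ 2)) / (w ^ 2) ^ 2 / α ((w ^ 2) ^ 2)
    + 4096 * ((α (w ^ 2) ^ 3 - α w ^ 2 * α ((w ^ 2) ^ 2)) / w / (α w * α (w ^ 2) ^ 2))

theorem tendsto_sq_nhdsNE_zero : Tendsto (fun w : ℂ => w ^ 2) (𝓝[≠] 0) (𝓝[≠] 0) :=
  tendsto_nhdsWithin_iff.mpr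
    ⟨((continuous_pow 2).tendsto' (0 : ℂ) 0 (by simp)).mono_left nhdsWithin_le_nhds,
      eventually_nhdsWithin_of_forall fun _ hw => pow_ne_zero 2 hw⟩

theorem tendsto_jRemainder {α : ℂ → ℂ} (hα : HasQuadraticExpansion α 1 (-24) 252) :
    Tendsto (jRemainder α) (𝓝[≠] 0) (𝓝 196884) := by
  have hM : HasQuadraticExpansion (fun x => α x - (1 - 24 * x) * α (x ^ 2)) 0 0 276 := by
    convert hα.sub ((hasQuadraticExpansion_quadratic 1 (-24) 0).mul hα.comp_sq) using 1
    · ext x; ring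
    all_goals norm_num
  have hN : HasQuadraticExpansion (fun w => α (w ^ 2) ^ 3 - α w ^ 2 * α ((w ^ 2) ^ 2))
      0 48 (-1152) := by
    convert (hα.comp_sq.pow 3).sub ((hα.pow 2).mul hα.comp_sq.comp_sq) using 1 <;>
      norm_num [Nat.choose]
  have hle : 𝓝[≠] (0 : ℂ) ≤ 𝓝 0 := nhdsWithin_le_nhds
  have h₁ := hα.tendsto.mono_left hle
  have h₂ := hα.comp_sq.tendsto.mono_left hle
  have h₄ := hα.comp_sq.comp_sq.tendsto.mono_left hle
  have h := ((hM.tendsto_div_sq.comp tendsto_sq_nhdsNE_zero).div h₄ one_ne_zero).add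
    ((hN.tendsto_div.div (h₁.mul (h₂.pow 2)) (by norm_num)).const_mul 4096)
  norm_num at h
  exact h

theorem eta_pow_24 (τ : ℂ) :
    η τ ^ 24 = cexp (2 * Real.pi * I * τ) * eulerFunction (cexp (2 * Real.pi * I * τ)) ^ 24 := by
  have hpow (n : ℕ) :
      cexp (2 * Real.pi * I * (n + 1) * τ) = cexp (2 * Real.pi * I * τ) ^ (n + 1) := by
    rw [← Complex.exp_nat_mul]
    push_cast
    ring_nf
  rw [η, eulerFunction, mul_pow, ← Complex.exp_nat_mul]
  simp only [hpow]
  push_cast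
  ring_nf

theorem jEta_sub_mul_eq_jRemainder (τ : ℂ)
    (h₁ : eulerFunction (cexp (Real.pi * I * τ)) ≠ 0)
    (h₂ : eulerFunction (cexp (Real.pi * I * τ) ^ 2) ≠ 0)
    (h₄ : eulerFunction ((cexp (Real.pi * I * τ) ^ 2) ^ 2) ≠ 0) :
    (jEta τ - cexp (-(2 * Real.pi * I * τ)) - 744) * cexp (-(2 * Real.pi * I * τ)) =
      jRemainder (fun x => eulerFunction x ^ 24) (cexp (Real.pi * I * τ)) := by
  set w := cexp (Real.pi * I * τ)
  have hw : w ≠ 0 := Complex.exp_ne_zero _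
  have e₁ : cexp (2 * Real.pi * I * (τ / 2)) = w := by congr 1; ring
  have e₂ : cexp (2 * Real.pi * I * τ) = w ^ 2 := by
    rw [← Complex.exp_nat_mul]; congr 1; push_cast; ring
  have e₄ : cexp (2 * Real.pi * I * (2 * τ)) = (w ^ 2) ^ 2 := by
    rw [← e₂, ← Complex.exp_nat_mul]; congr 1; push_cast; ring
  have eneg : cexp (-(2 * Real.pi * I * τ)) = (w ^ 2)⁻¹ := by rw [Complex.exp_neg, e₂]
  rw [jEta, show η τ ^ 48 = (η τ ^ 24) ^ 2 by ring, eta_pow_24 τ, eta_pow_24 (τ / 2),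
    eta_pow_24 (2 * τ), e₁, e₂, e₄, eneg, jRemainder]
  have h₄' : eulerFunction (w ^ 4) ≠ 0 := by simpa [← pow_mul] using h₄
  field_simp
  ring

theorem tendsto_cexp_pi_mul_I_mul_comap_im_atTop :
    Tendsto (fun τ : ℂ => cexp (Real.pi * I * τ)) (comap im atTop) (𝓝[≠] 0) := by
  refine tendsto_exp_comap_re_atBot_nhdsNE.comp (tendsto_comap_iff.mpr ?_)
  have hre : (re ∘ fun τ : ℂ => Real.pi * I * τ) = fun τ => -Real.pi * τ.im := by
    ext τ; simp
  rw [hre]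
  exact (tendsto_const_mul_atBot_of_neg (neg_neg_of_pos Real.pi_pos)).mpr tendsto_comap

open Filter in
/-- With `q = e^{2πiτ}`, the `q`-expansion of `j` begins `q⁻¹ + 744 + 196884q + O(q²)`:
as `Im τ → ∞` one has `j(τ) − e^{−2πiτ} → 744` and
`( j(τ) − e^{−2πiτ} − 744 )·e^{−2πiτ} → 196884`. -/
theorem statement19 :
    Tendsto (fun τ : ℂ => jEta τ - Complex.exp (-(2 * Real.pi * Complex.I * τ)))
      (Filter.comap Complex.im Filter.atTop) (nhds 744) ∧
    Tendsto
      (fun τ : ℂ =>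
        (jEta τ - Complex.exp (-(2 * Real.pi * Complex.I * τ)) - 744) *
          Complex.exp (-(2 * Real.pi * Complex.I * τ)))
      (Filter.comap Complex.im Filter.atTop) (nhds 196884) := by
  have hw := tendsto_cexp_pi_mul_I_mul_comap_im_atTop
  have hφ := hasQuadraticExpansion_eulerFunction
  have hne : ∀ᶠ w in 𝓝 (0 : ℂ), eulerFunction w ≠ 0 ∧ eulerFunction (w ^ 2) ≠ 0 ∧
      eulerFunction ((w ^ 2) ^ 2) ≠ 0 :=
    (hφ.tendsto.eventually_ne one_ne_zero).and ((hφ.comp_sq.tendsto.eventually_ne one_ne_zero).and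
      (hφ.comp_sq.comp_sq.tendsto.eventually_ne one_ne_zero))
  have hlim := ((tendsto_jRemainder hasQuadraticExpansion_eulerFunction_pow_24).comp hw).congr' <|
    by filter_upwards [hw.eventually (nhdsWithin_le_nhds hne)] with τ ⟨h₁, h₂, h₄⟩
       exact (jEta_sub_mul_eq_jRemainder τ h₁ h₂ h₄).symm
  refine ⟨?_, hlim⟩
  have hq : Tendsto (fun τ : ℂ => cexp (2 * Real.pi * I * τ)) (comap im atTop) (𝓝 0) :=
    ((tendsto_sq_nhdsNE_zero.comp hw).mono_right nhdsWithin_le_nhds).congr fun τ => by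
      rw [Function.comp_apply, ← Complex.exp_nat_mul]; push_cast; ring_nf
  convert (hlim.mul hq).add_const 744 using 2 with τ
  · have hinv : cexp (-(2 * Real.pi * I * τ)) * cexp (2 * Real.pi * I * τ) = 1 := by
      rw [← Complex.exp_add, neg_add_cancel, Complex.exp_zero]
    linear_combination -(jEta τ - cexp (-(2 * Real.pi * I * τ)) - 744) * hinv
  · norm_num
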